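/- Let E be a very ample vector bundle of rank r on a smooth projective curve C of genus 2. Then μ⁻(E) > 3, and consequently h^1(C, S^t(E)) = 0 for all t ≥ 1. -/
import Mathlib


/-- A very ample vector bundle E on a smooth genus-2 curve has μ⁻(E) > 3,
and consequently h^1(C, S^t E) = 0 for all t ≥ 1.  Bundles are abstracted as a type with
degree, rank, quotient relation, very-ampleness, semistability, symmetric powers, h^1 and μ⁻.
The hypotheses encode: quotients of very ample bundles are very ample; very ample line
bundles on a genus 2 curve have degree ≥ 5; c_1(E) ≥ 3 rk + 1 for very ample E;
μ⁻ = μ for semistable bundles and μ⁻ is attained on a proper quotient otherwise;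
μ⁻(S^t E) = t μ⁻(E); and μ⁻ > 2g-2 = 2 implies h^1 = 0. -/
theorem very_ample_genus_two_slope {B : Type*}
    (deg : B → ℤ) (rk : B → ℕ) (QuotB : B → B → Prop)
    (VeryAmple Semistable : B → Prop) (Sym : B → ℕ → B)
    (h1C : B → ℕ) (muMinus : B → ℚ) (E : B)
    (hrk : ∀ X, 0 < rk X)
    (hrefl : ∀ X, QuotB X X)
    (hquotVA : ∀ X Q, VeryAmple X → QuotB X Q → VeryAmple Q)
    (hmu_le : ∀ X Q, QuotB X Q → muMinus X ≤ (deg Q : ℚ) / (rk Q))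
    (hss : ∀ X, Semistable X → muMinus X = (deg X : ℚ) / (rk X))
    (hns : ∀ X, VeryAmple X → ¬ Semistable X →
      ∃ Q, QuotB X Q ∧ VeryAmple Q ∧ rk Q < rk X ∧ muMinus X = (deg Q : ℚ) / (rk Q))
    (hc1 : ∀ X, VeryAmple X → 3 * (rk X : ℤ) + 1 ≤ deg X)
    (hla : ∀ X, VeryAmple X → rk X = 1 → 5 ≤ deg X)
    (hsymmu : ∀ X (t : ℕ), muMinus (Sym X t) = t * muMinus X)
    (hvanish : ∀ X, (2 : ℚ) < muMinus X → h1C X = 0)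
    (hE : VeryAmple E) :
    3 < muMinus E ∧ ∀ t : ℕ, 1 ≤ t → h1C (Sym E t) = 0 := by
  have key : ∀ X, VeryAmple X → 3 < (deg X : ℚ) / (rk X) := by
    intro X hX
    have hr : (0:ℚ) < (rk X : ℚ) := by exact_mod_cast hrk X
    have hd : 3 * (rk X : ℤ) + 1 ≤ deg X := hc1 X hX
    rw [lt_div_iff₀ hr]
    have : (3 : ℚ) * (rk X : ℚ) + 1 ≤ (deg X : ℚ) := by exact_mod_cast hd
    linarith
  have hmain : 3 < muMinus E := by
    by_cases hs : Semistable E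
    · rw [hss E hs]; exact key E hE
    · obtain ⟨Q, _, hQva, _, hmuQ⟩ := hns E hE hs
      rw [hmuQ]; exact key Q hQva
  refine ⟨hmain, fun t ht => ?_⟩
  apply hvanish
  rw [hsymmu]
  have ht' : (1:ℚ) ≤ (t:ℚ) := by exact_mod_cast ht
  nlinarith
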